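/- Let f ∈ ℝ^{d_1×…×d_m} be a nonnegative weakly irreducible tensor and 1 < p_1,…,p_m < ∞. Then for every i, k ∈ [m] with i ≠ k and every z ∈ ℝ^{d−d_i} with all entries strictly positive, s_{i,k}(z) has all entries strictly positive. -/

import Mathlib

/-!
Common setup: tensors `f : (∀ i, Fin (d i)) → ℝ`, the induced multilinear form,
partial gradients, `ψ_q`, `ℓ^p` norms, Hölder conjugates, singular vectors,
(weak) irreducibility, the maps `σ_i`, `s_{i,k}`, `T_α`, `G`, the quantities
`Q`, `‖f‖_{p_1,…,p_m}`, `Q_i`, `γ_i^±` and the Hilbert-type metric `μ`.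
Points of `ℝ^{d-d_i}` are encoded as full tuples (the maps involved do not
depend on the `i`-th component), with conditions imposed only for `k ≠ i`.
-/

open Finset Filter

noncomputable section

namespace TensorPF

variable {m : ℕ} {d : Fin m → ℕ}

/-- The multilinear form induced by the tensor `f`. -/
def form (f : (∀ i, Fin (d i)) → ℝ) (x : ∀ i, Fin (d i) → ℝ) : ℝ :=
  ∑ j : ∀ i, Fin (d i), f j * ∏ i, x i (j i)

/-- The gradient of the multilinear form in its `i`-th argument. -/
def grad (f : (∀ i, Fin (d i)) → ℝ) (i : Fin m) (x : ∀ i, Fin (d i) → ℝ) :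
    Fin (d i) → ℝ :=
  fun ji => form f (Function.update x i (fun l => if l = ji then (1 : ℝ) else 0))

/-- `ψ_q(y)_j = |y_j|^(q-1) sign(y_j)`. -/
def psi (q : ℝ) {n : ℕ} (y : Fin n → ℝ) : Fin n → ℝ :=
  fun j => |y j| ^ (q - 1) * Real.sign (y j)

/-- The `ℓ^q`-norm on `Fin n → ℝ`. -/
def pnorm (q : ℝ) {n : ℕ} (y : Fin n → ℝ) : ℝ :=
  (∑ j, |y j| ^ q) ^ (1 / q)

/-- The Hölder conjugate `q' = q/(q-1)`. -/
def conjExp (q : ℝ) : ℝ := q / (q - 1)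

/-- `σ_i(x) = sign(f(x)) ψ_{p_i'}(∇_i f(x))`. -/
def sigma (f : (∀ i, Fin (d i)) → ℝ) (p : Fin m → ℝ) (i : Fin m)
    (x : ∀ i, Fin (d i) → ℝ) : Fin (d i) → ℝ :=
  fun ji => Real.sign (form f x) * psi (conjExp (p i)) (grad f i x) ji

/-- `Q(x) = |f(x)| / ∏ i ‖x_i‖_{p_i}`. -/
def Qform (f : (∀ i, Fin (d i)) → ℝ) (p : Fin m → ℝ)
    (x : ∀ i, Fin (d i) → ℝ) : ℝ :=
  |form f x| / ∏ i, pnorm (p i) (x i)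

/-- The projective tensor norm `‖f‖_{p_1,…,p_m} = sup Q`. -/
def tnorm (f : (∀ i, Fin (d i)) → ℝ) (p : Fin m → ℝ) : ℝ :=
  sSup {q : ℝ | ∃ x : ∀ i, Fin (d i) → ℝ, (∀ i, x i ≠ 0) ∧ q = Qform f p x}

/-- `x ∈ S^d` is a singular vector of `f` with singular value `lam` if
`σ_i(x) = lam^{p_i'-1} x_i` for all `i`. -/
def IsSingular (f : (∀ i, Fin (d i)) → ℝ) (p : Fin m → ℝ) (lam : ℝ)
    (x : ∀ i, Fin (d i) → ℝ) : Prop :=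
  (∀ i, pnorm (p i) (x i) = 1) ∧
  ∀ i ji, sigma f p i x ji = lam ^ (conjExp (p i) - 1) * x i ji

/-- `s_{i,k}(x) = ψ_{p_k'}(∇_k f(x_1,…,ψ_{p_i'}(∇_i f(x)),…,x_m))`. -/
def sik (f : (∀ i, Fin (d i)) → ℝ) (p : Fin m → ℝ) (i k : Fin m)
    (x : ∀ l, Fin (d l) → ℝ) : Fin (d k) → ℝ :=
  psi (conjExp (p k))
    (grad f k (Function.update x i (psi (conjExp (p i)) (grad f i x))))

/-- The `m`-partite graph associated to a nonnegative tensor. -/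
def wGraph (f : (∀ i, Fin (d i)) → ℝ) : SimpleGraph ((k : Fin m) × Fin (d k)) where
  Adj a b := a.1 ≠ b.1 ∧ ∃ j : ∀ l, Fin (d l), j a.1 = a.2 ∧ j b.1 = b.2 ∧ 0 < f j
  symm := by
    constructor
    rintro a b ⟨h, j, h1, h2, h3⟩
    exact ⟨h.symm, j, h2, h1, h3⟩
  loopless := by constructor; rintro a ⟨h, -⟩; exact h rfl

/-- `f ≥ 0` is weakly irreducible if its graph is connected. -/
def WeaklyIrreducible (f : (∀ i, Fin (d i)) → ℝ) : Prop := (wGraph f).Connected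

/-- `f ≥ 0` is irreducible. -/
def Irreducible (f : (∀ i, Fin (d i)) → ℝ) : Prop :=
  ∀ J : Set ((k : Fin m) × Fin (d k)), J.Nonempty → J ≠ Set.univ →
    ∃ (k : Fin m) (j : ∀ l, Fin (d l)),
      (⟨k, j k⟩ : (l : Fin m) × Fin (d l)) ∈ J ∧
      (∀ l, l ≠ k → (⟨l, j l⟩ : (l : Fin m) × Fin (d l)) ∉ J) ∧ 0 < f j

/-- `T_α(z) = α_0 z + (α_1 σ_1(z),…,α_m σ_m(z))`. -/
def Tmap (f : (∀ i, Fin (d i)) → ℝ) (p : Fin m → ℝ) (a0 : ℝ) (a : Fin m → ℝ)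
    (z : ∀ i, Fin (d i) → ℝ) : ∀ i, Fin (d i) → ℝ :=
  fun i ji => a0 * z i ji + a i * sigma f p i z ji

/-- `Q_i(x) = ‖∇_i f(x)‖_{p_i'} / ∏_{k ≠ i} ‖x_k‖_{p_k}`. -/
def Qi (f : (∀ i, Fin (d i)) → ℝ) (p : Fin m → ℝ) (i : Fin m)
    (x : ∀ l, Fin (d l) → ℝ) : ℝ :=
  pnorm (conjExp (p i)) (grad f i x) / ∏ k ∈ Finset.univ.erase i, pnorm (p k) (x k)

/-- A critical point of `Q_i` with critical value `lam`. -/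
def IsCritQi (f : (∀ i, Fin (d i)) → ℝ) (p : Fin m → ℝ) (i : Fin m) (lam : ℝ)
    (x : ∀ l, Fin (d l) → ℝ) : Prop :=
  (∀ k, k ≠ i → pnorm (p k) (x k) = 1) ∧ grad f i x ≠ 0 ∧
  ∀ k, k ≠ i → ∀ jk,
    sik f p i k x jk = lam ^ (conjExp (p i) * (conjExp (p k) - 1)) * x k jk

/-- Collatz–Wielandt ratio `γ_i^-`. -/
def gammaMinus (f : (∀ i, Fin (d i)) → ℝ) (p : Fin m → ℝ) (i : Fin m)
    (x : ∀ l, Fin (d l) → ℝ) : ℝ :=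
  ∏ k ∈ Finset.univ.erase i, ⨅ jk : Fin (d k), (sik f p i k x jk / x k jk) ^ (p k - 1)

/-- Collatz–Wielandt ratio `γ_i^+`. -/
def gammaPlus (f : (∀ i, Fin (d i)) → ℝ) (p : Fin m → ℝ) (i : Fin m)
    (x : ∀ l, Fin (d l) → ℝ) : ℝ :=
  ∏ k ∈ Finset.univ.erase i, ⨆ jk : Fin (d k), (sik f p i k x jk / x k jk) ^ (p k - 1)

/-- The power-method map `G(x) = (s_{i,k}(x)/‖s_{i,k}(x)‖_{p_k})_{k≠i}`. -/
def Gmap (f : (∀ i, Fin (d i)) → ℝ) (p : Fin m → ℝ) (i : Fin m)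
    (x : ∀ l, Fin (d l) → ℝ) : ∀ l, Fin (d l) → ℝ :=
  fun k jk => sik f p i k x jk / pnorm (p k) (sik f p i k x)

/-- The Hilbert-type metric `μ` on `S^{d-d_i}_{++}`. -/
def mu (p : Fin m → ℝ) (i : Fin m) (x y : ∀ l, Fin (d l) → ℝ) : ℝ :=
  Real.log (∏ l ∈ Finset.univ.erase i,
    (⨆ jl : Fin (d l), (x l jl / y l jl) ^ (p l - 1)) /
    (⨅ jl : Fin (d l), (x l jl / y l jl) ^ (p l - 1)))


/-
The `k`-th coordinate of `s_{i,k}(z)` is a positive power of a sum of nonnegative terms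
`f_j ∏_{l ≠ k} x_l(j_l)`, where `x` is `z` with its `i`-th component replaced by
`ψ(∇_i f(z)) ≥ 0`. Weak irreducibility gives, for each vertex `(k, j_k)`, an edge leaving it,
i.e. a multi-index `j` through `j_k` with `f_j > 0`; the same `j` makes `∇_i f(z)_{j_i} > 0`,
so the corresponding term of the sum is positive.
-/

lemma psi_pos {q : ℝ} {n : ℕ} {y : Fin n → ℝ} {j : Fin n} (h : 0 < y j) :
    0 < psi q y j := by
  rw [psi, Real.sign_of_pos h, mul_one]
  exact Real.rpow_pos_of_pos (abs_pos.mpr h.ne') _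

lemma psi_nonneg {q : ℝ} {n : ℕ} {y : Fin n → ℝ} {j : Fin n} (h : 0 ≤ y j) :
    0 ≤ psi q y j := by
  rcases h.eq_or_lt with h0 | h0
  · rw [psi, ← h0, Real.sign_zero, mul_zero]
  · exact (psi_pos h0).le

section Nonneg

variable {f : (∀ i, Fin (d i)) → ℝ} {x : ∀ i, Fin (d i) → ℝ}

lemma form_nonneg (hf0 : ∀ j, 0 ≤ f j) (hx : ∀ l jl, 0 ≤ x l jl) : 0 ≤ form f x :=
  sum_nonneg fun j _ => mul_nonneg (hf0 j) (prod_nonneg fun l _ => hx l (j l))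

lemma form_pos (hf0 : ∀ j, 0 ≤ f j) (hx : ∀ l jl, 0 ≤ x l jl) {j : ∀ l, Fin (d l)}
    (hfj : 0 < f j) (hxj : ∀ l, 0 < x l (j l)) : 0 < form f x :=
  sum_pos' (fun j _ => mul_nonneg (hf0 j) (prod_nonneg fun l _ => hx l (j l)))
    ⟨j, mem_univ j, mul_pos hfj (prod_pos fun l _ => hxj l)⟩

lemma update_single_nonneg {i : Fin m} (ji : Fin (d i)) (hx : ∀ l, l ≠ i → ∀ jl, 0 ≤ x l jl) :
    ∀ l jl, 0 ≤ Function.update x i (fun l => if l = ji then (1 : ℝ) else 0) l jl := by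
  intro l jl
  rcases eq_or_ne l i with rfl | hl
  · rw [Function.update_self]
    split_ifs <;> norm_num
  · rw [Function.update_of_ne hl]
    exact hx l hl jl

lemma grad_nonneg (hf0 : ∀ j, 0 ≤ f j) {i : Fin m} (hx : ∀ l, l ≠ i → ∀ jl, 0 ≤ x l jl)
    (ji : Fin (d i)) : 0 ≤ grad f i x ji :=
  form_nonneg hf0 (update_single_nonneg ji hx)

lemma grad_pos (hf0 : ∀ j, 0 ≤ f j) {i : Fin m} (hx : ∀ l, l ≠ i → ∀ jl, 0 ≤ x l jl)
    {j : ∀ l, Fin (d l)} (hfj : 0 < f j) (hxj : ∀ l, l ≠ i → 0 < x l (j l)) :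
    0 < grad f i x (j i) := by
  refine form_pos hf0 (update_single_nonneg (j i) hx) hfj fun l => ?_
  rcases eq_or_ne l i with rfl | hl
  · simp
  · rw [Function.update_of_ne hl]
    exact hxj l hl

lemma sik_pos (hf0 : ∀ j, 0 ≤ f j) (p : Fin m → ℝ) {i : Fin m} (k : Fin m)
    (hx : ∀ l, l ≠ i → ∀ jl, 0 < x l jl) {j : ∀ l, Fin (d l)} (hfj : 0 < f j) :
    0 < sik f p i k x (j k) := by
  have hgrad_nonneg := grad_nonneg hf0 fun l hl jl => (hx l hl jl).le
  have hgrad_pos := grad_pos hf0 (fun l hl jl => (hx l hl jl).le) hfj fun l hl => hx l hl (j l)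
  refine psi_pos (grad_pos hf0 (fun l _ jl => ?_) hfj fun l _ => ?_)
  · rcases eq_or_ne l i with rfl | hl
    · rw [Function.update_self]
      exact psi_nonneg (hgrad_nonneg jl)
    · rw [Function.update_of_ne hl]
      exact (hx l hl jl).le
  · rcases eq_or_ne l i with rfl | hl
    · rw [Function.update_self]
      exact psi_pos hgrad_pos
    · rw [Function.update_of_ne hl]
      exact hx l hl (j l)

end Nonneg

lemma WeaklyIrreducible.exists_pos_through {f : (∀ i, Fin (d i)) → ℝ}
    (hwirr : WeaklyIrreducible f) {k k' : Fin m} (hkk' : k ≠ k') (jk : Fin (d k))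
    (jk' : Fin (d k')) : ∃ j : ∀ l, Fin (d l), j k = jk ∧ 0 < f j := by
  have hne : (⟨k, jk⟩ : (l : Fin m) × Fin (d l)) ≠ ⟨k', jk'⟩ :=
    fun h => hkk' (congrArg Sigma.fst h)
  obtain ⟨walk⟩ := hwirr.preconnected ⟨k, jk⟩ ⟨k', jk'⟩
  obtain ⟨-, j, hjk, -, hfj⟩ := walk.adj_snd (SimpleGraph.Walk.not_nil_of_ne hne)
  exact ⟨j, hjk, hfj⟩

theorem statement_7_general {m : ℕ} {d : Fin m → ℕ} (hd : ∀ k, 0 < d k)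
    (p : Fin m → ℝ)
    (f : (∀ i, Fin (d i)) → ℝ) (hf0 : ∀ j, 0 ≤ f j)
    (hwirr : WeaklyIrreducible f) :
    ∀ i k : Fin m, i ≠ k →
      ∀ z : ∀ l, Fin (d l) → ℝ, (∀ l, l ≠ i → ∀ jl, 0 < z l jl) →
      ∀ jk, 0 < sik f p i k z jk := by
  intro i k hik z hz jk
  obtain ⟨j, rfl, hfj⟩ := hwirr.exists_pos_through hik.symm jk ⟨0, hd i⟩
  exact sik_pos hf0 p k hz hfj

/-- for a nonnegative weakly irreducible tensor, `s_{i,k}(z) > 0`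
for every strictly positive `z ∈ ℝ^{d-d_i}` and all `i ≠ k`. -/
theorem statement_7 {m : ℕ} {d : Fin m → ℕ} (hm : 2 ≤ m) (hd : ∀ k, 0 < d k)
    (p : Fin m → ℝ) (hp : ∀ k, 1 < p k)
    (f : (∀ i, Fin (d i)) → ℝ) (hf0 : ∀ j, 0 ≤ f j)
    (hwirr : WeaklyIrreducible f) :
    ∀ i k : Fin m, i ≠ k →
      ∀ z : ∀ l, Fin (d l) → ℝ, (∀ l, l ≠ i → ∀ jl, 0 < z l jl) →
      ∀ jk, 0 < sik f p i k z jk :=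
  statement_7_general hd p f hf0 hwirr

end TensorPF
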